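/- For every action symbol a and every EPDL formula φ, the formula K⦗a⦘φ ↔ ⟨?K⟨a⟩⊤;a⟩Kφ is valid on uncertainty maps, where ⦗a⦘φ abbreviates [a]φ ∧ ⟨a⟩φ. -/

import Mathlib

mutual
/-- Formulas of EPDL. -/
inductive EForm (P A : Type) : Type
  | top : EForm P A
  | atom : P → EForm P A
  | neg : EForm P A → EForm P A
  | and : EForm P A → EForm P A → EForm P A
  | box : EProg P A → EForm P A → EForm P A
  | know : EForm P A → EForm P A
/-- Programs of EPDL. -/
inductive EProg (P A : Type) : Type
  | act : A → EProg P A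
  | test : EForm P A → EProg P A
  | seq : EProg P A → EProg P A → EProg P A
  | choice : EProg P A → EProg P A → EProg P A
  | star : EProg P A → EProg P A
end

namespace EForm
variable {P A : Type}
/-- φ ∨ ψ := ¬(¬φ ∧ ¬ψ) -/
def or (φ ψ : EForm P A) : EForm P A := neg (and (neg φ) (neg ψ))
/-- φ → ψ := ¬φ ∨ ψ -/
def imp (φ ψ : EForm P A) : EForm P A := or (neg φ) ψ
def iff (φ ψ : EForm P A) : EForm P A := and (imp φ ψ) (imp ψ φ)
/-- ⟨π⟩φ := ¬[π]¬φ -/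
def dia (π : EProg P A) (φ : EForm P A) : EForm P A := neg (box π (neg φ))
/-- ⦗π⦘φ := [π]φ ∧ ⟨π⟩φ -/
def bbox (π : EProg P A) (φ : EForm P A) : EForm P A := and (box π φ) (dia π φ)
/-- K̂φ := ¬K¬φ -/
def hatK (φ : EForm P A) : EForm P A := neg (know (neg φ))
end EForm

/-- A Kripke model with labelled relations. -/
structure Kripke (P A : Type) where
  S : Type
  R : A → S → S → Prop
  V : S → P → Prop

namespace Kripke
variable {P A : Type}
/-- U|^a -/
def img (N : Kripke P A) (a : A) (U : Set N.S) : Set N.S := {t | ∃ u ∈ U, N.R a u t}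
/-- Iterated update U|^σ along a sequence of actions. -/
def updU (N : Kripke P A) : Set N.S → List A → Set N.S
  | U, [] => U
  | U, a :: σ => N.updU (N.img a U) σ
end Kripke

mutual
/-- Truth of an EPDL formula at a pointed uncertainty map, represented by the
(fixed) Kripke model `N`, an uncertainty set `U` and a state `s`. -/
def eSat {P A : Type} (N : Kripke P A) : Set N.S → N.S → EForm P A → Prop
  | _, _, .top => True
  | _, s, .atom p => N.V s p
  | U, s, .neg φ => ¬ eSat N U s φ
  | U, s, .and φ ψ => eSat N U s φ ∧ eSat N U s ψ
  | U, s, .box π φ => ∀ c : Set N.S × N.S, eRel N π (U, s) c → eSat N c.1 c.2 φ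
  | U, _, .know φ => ∀ u ∈ U, eSat N U u φ
/-- The relation ⟦π⟧ between pointed uncertainty maps (over a fixed Kripke model
`N`, a pointed uncertainty map is a pair of an uncertainty set and a state). -/
def eRel {P A : Type} (N : Kripke P A) : EProg P A → Set N.S × N.S → Set N.S × N.S → Prop
  | .act a, c, c' => c'.1 = N.img a c.1 ∧ N.R a c.2 c'.2
  | .test ψ, c, c' => c' = c ∧ eSat N c.1 c.2 ψ
  | .seq π₁ π₂, c, c' => ∃ d, eRel N π₁ c d ∧ eRel N π₂ d c'
  | .choice π₁ π₂, c, c' => eRel N π₁ c c' ∨ eRel N π₂ c c'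
  | .star π, c, c' => Relation.ReflTransGen (fun x y => eRel N π x y) c c'
end

/-- Validity: truth at every pointed uncertainty map. -/
def eValid {P A : Type} (φ : EForm P A) : Prop :=
  ∀ (N : Kripke P A) (U : Set N.S), U.Nonempty → ∀ s ∈ U, eSat N U s φ

/-!
Knowing `⦗a⦘φ` splits into two pieces of knowledge: every possible state has an `a`-successor
(that is `K⟨a⟩⊤`), and every possible state satisfies `[a]φ`, which says exactly that `Kφ` holds
after the update `U ↦ U|^a`. Since the actual state lies in `U`, it has an `a`-successor, and
that successor witnesses the diamond `⟨?K⟨a⟩⊤;a⟩Kφ`. Conversely, `[a]φ` together with the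
existence of an `a`-successor gives `⟨a⟩φ`.
-/

section Semantics

variable {P A : Type} (N : Kripke P A) (U : Set N.S) (s : N.S)

@[simp]
theorem eSat_neg (φ : EForm P A) : eSat N U s (.neg φ) ↔ ¬ eSat N U s φ := by
  rw [eSat]

@[simp]
theorem eSat_and (φ ψ : EForm P A) : eSat N U s (.and φ ψ) ↔ eSat N U s φ ∧ eSat N U s ψ := by
  rw [eSat]

@[simp]
theorem eSat_know (φ : EForm P A) : eSat N U s (.know φ) ↔ ∀ u ∈ U, eSat N U u φ := by
  rw [eSat]

@[simp]
theorem eSat_top : eSat N U s (.top : EForm P A) := by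
  rw [eSat]
  trivial

theorem eSat_iff (φ ψ : EForm P A) : eSat N U s (φ.iff ψ) ↔ (eSat N U s φ ↔ eSat N U s ψ) := by
  simp only [EForm.iff, EForm.imp, EForm.or, eSat_neg, eSat_and]
  tauto

theorem eSat_box_act (a : A) (φ : EForm P A) :
    eSat N U s (.box (.act a) φ) ↔ ∀ t, N.R a s t → eSat N (N.img a U) t φ := by
  simp only [eSat, eRel, Prod.forall]
  exact ⟨fun h t hst => h _ t ⟨rfl, hst⟩, by rintro h _ t ⟨rfl, hst⟩; exact h t hst⟩

theorem eSat_dia_act (a : A) (φ : EForm P A) :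
    eSat N U s (EForm.dia (.act a) φ) ↔ ∃ t, N.R a s t ∧ eSat N (N.img a U) t φ := by
  simp [EForm.dia, eSat_box_act]

theorem eSat_dia_seq_test (ψ : EForm P A) (π : EProg P A) (φ : EForm P A) :
    eSat N U s (EForm.dia (.seq (.test ψ) π) φ) ↔ eSat N U s ψ ∧ eSat N U s (EForm.dia π φ) := by
  simp only [EForm.dia, eSat_neg, eSat, eRel, not_forall, not_not, exists_prop]
  constructor
  · rintro ⟨c, ⟨d, ⟨rfl, hψ⟩, hc⟩, hφ⟩
    exact ⟨hψ, c, hc, hφ⟩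
  · rintro ⟨hψ, c, hc, hφ⟩
    exact ⟨c, ⟨(U, s), ⟨rfl, hψ⟩, hc⟩, hφ⟩

theorem eSat_know_img (a : A) (φ : EForm P A) :
    eSat N (N.img a U) s (.know φ) ↔ ∀ u ∈ U, eSat N U u (.box (.act a) φ) := by
  simp only [eSat_know, eSat_box_act, Kripke.img, Set.mem_ofPred_eq]
  exact ⟨fun h u hu t hut => h t ⟨u, hu, hut⟩, fun h t ⟨u, hu, hut⟩ => h u hu t hut⟩

end Semantics

/-- For every action symbol a and every EPDL formula φ, the formula
K⦗a⦘φ ↔ ⟨?K⟨a⟩⊤;a⟩Kφ is valid on uncertainty maps, where ⦗a⦘φ := [a]φ ∧ ⟨a⟩φ. -/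
theorem know_bbox_valid {P A : Type} [Countable P] [Countable A]
    (a : A) (φ : EForm P A) :
    eValid (EForm.iff (EForm.know (EForm.bbox (EProg.act a) φ))
      (EForm.dia
        (EProg.seq (EProg.test (EForm.know (EForm.dia (EProg.act a) EForm.top))) (EProg.act a))
        (EForm.know φ))) := by
  unfold eValid
  intro N U _ s hs
  rw [eSat_iff, eSat_dia_seq_test, eSat_dia_act]
  simp only [eSat_know_img]
  simp only [EForm.bbox, eSat_know, eSat_and, eSat_dia_act, eSat_top, and_true]
  constructor
  · intro h
    obtain ⟨t, hst, -⟩ := (h s hs).2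
    exact ⟨fun u hu => ((h u hu).2).imp fun _ ht => ht.1, t, hst, fun u hu => (h u hu).1⟩
  · rintro ⟨hsucc, -, -, hbox⟩ u hu
    obtain ⟨t, hut⟩ := hsucc u hu
    exact ⟨hbox u hu, t, hut, (eSat_box_act N U u a φ).1 (hbox u hu) t hut⟩
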